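/- Let φ be a 3-CNF formula with m clauses over n variables where each literal appears exactly twice (so 4n = 3m). In the shopping instance constructed from φ (clause shops Cᵢ with discount 1 at threshold 1; variable shops tᵢ, fᵢ each selling 3 unit-price books with discount 2 at threshold 3), any truth assignment satisfying k clauses yields a purchase plan with total discount at least 2n + k. -/

import Mathlib

/-- MAX-3-SAT reduction, completeness direction: a truth assignment `τ`
satisfying `k` clauses yields a purchase plan of discount at least `2n + k`.
Books: one per literal occurrence `(i, j)` plus one per variable; shop
`.inl i` is the clause shop `Cᵢ` (discount 1, threshold 1) selling the three
occurrence-books of clause `i`; shop `.inr (v, sgn)` is `t_v` (`sgn = true`)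
or `f_v` (`sgn = false`), selling book `x_v` and the occurrence-books of the
literal `(v, sgn)` (discount 2, threshold 3); all prices are 1. -/
theorem stmt_11 {n m : ℕ} (clauses : Fin m → Fin 3 → Fin n × Bool)
    (hlit : ∀ (v : Fin n) (sgn : Bool),
      (Finset.univ.filter (fun p : Fin m × Fin 3 => clauses p.1 p.2 = (v, sgn))).card = 2)
    (τ : Fin n → Bool) :
    let Book := (Fin m × Fin 3) ⊕ Fin n
    let Shop := Fin m ⊕ (Fin n × Bool)
    let sells : Shop → Book → Prop := fun s b =>
      match s, b with
      | .inl i, .inl (i', _) => i' = i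
      | .inl _, .inr _ => False
      | .inr (v, sgn), .inl (i, j) => clauses i j = (v, sgn)
      | .inr (v, _), .inr v' => v' = v
    let dshop : Shop → ℕ := Sum.elim (fun _ => 1) (fun _ => 2)
    let tshop : Shop → ℕ := Sum.elim (fun _ => 1) (fun _ => 3)
    ∃ g : Book → Shop, (∀ b, sells (g b) b) ∧
      2 * n + (Finset.univ.filter
          (fun i : Fin m => ∃ j : Fin 3, τ (clauses i j).1 = (clauses i j).2)).card
        ≤ ∑ s ∈ Finset.univ.filter
            (fun s : Shop =>
              tshop s ≤ (Finset.univ.filter (fun b : Book => g b = s)).card),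
          dshop s := by
  intro Book Shop sells dshop tshop
  classical
  set g : Book → Shop := fun b =>
    match b with
    | .inl (i, j) =>
        if τ (clauses i j).1 = (clauses i j).2 then .inl i else .inr (clauses i j)
    | .inr v => .inr (v, !τ v) with hg
  refine ⟨g, ?_, ?_⟩
  · rintro (⟨i, j⟩ | v)
    · by_cases h : τ (clauses i j).1 = (clauses i j).2
      · simp only [hg, h, if_true]
        show (i : Fin m) = i
        rfl
      · simp only [hg, h, if_false]
        show clauses i j = ((clauses i j).1, (clauses i j).2)
        rfl
    · show (v : Fin n) = v
      rfl
  · set SatC : Finset (Fin m) :=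
      Finset.univ.filter (fun i : Fin m => ∃ j : Fin 3, τ (clauses i j).1 = (clauses i j).2)
      with hSatC
    set F : Finset Shop :=
      Finset.univ.filter (fun s : Shop =>
        tshop s ≤ (Finset.univ.filter (fun b : Book => g b = s)).card) with hF
    set S₁ : Finset Shop := SatC.image Sum.inl with hS1
    set S₂ : Finset Shop :=
      (Finset.univ : Finset (Fin n)).image (fun v => Sum.inr (v, !τ v)) with hS2
    have hdisj : Disjoint S₁ S₂ := by
      rw [Finset.disjoint_left]
      rintro s hs1 hs2
      simp only [hS1, hS2, Finset.mem_image] at hs1 hs2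
      obtain ⟨i, _, rfl⟩ := hs1
      obtain ⟨v, _, h⟩ := hs2
      cases h
    have hsub : S₁ ∪ S₂ ⊆ F := by
      intro s hs
      rcases Finset.mem_union.mp hs with hs | hs
      · simp only [hS1, Finset.mem_image] at hs
        obtain ⟨i, hi, rfl⟩ := hs
        simp only [hSatC, Finset.mem_filter] at hi
        obtain ⟨-, j, hj⟩ := hi
        simp only [hF, Finset.mem_filter, Finset.mem_univ, true_and]
        show (1 : ℕ) ≤ _
        rw [Nat.succ_le_iff, Finset.card_pos]
        refine ⟨Sum.inl (i, j), ?_⟩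
        simp only [Finset.mem_filter, Finset.mem_univ, true_and, hg]
        simp [hj]
      · simp only [hS2, Finset.mem_image] at hs
        obtain ⟨v, -, rfl⟩ := hs
        simp only [hF, Finset.mem_filter, Finset.mem_univ, true_and]
        show (3 : ℕ) ≤ _
        have hTsub : insert (Sum.inr v : Book)
            ((Finset.univ.filter
              (fun p : Fin m × Fin 3 => clauses p.1 p.2 = (v, !τ v))).image Sum.inl)
            ⊆ Finset.univ.filter (fun b : Book => g b = Sum.inr (v, !τ v)) := by
          intro b hb
          rcases Finset.mem_insert.mp hb with rfl | hb
          · simp [hg]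
          · simp only [Finset.mem_image, Finset.mem_filter, Finset.mem_univ, true_and] at hb
            obtain ⟨⟨i, j⟩, hij, rfl⟩ := hb
            simp only [Finset.mem_filter, Finset.mem_univ, true_and, hg]
            have hne : ¬ τ (clauses i j).1 = (clauses i j).2 := by
              rw [hij]; simp
            simp [hne, hij]
        calc (3 : ℕ) = (insert (Sum.inr v : Book)
            ((Finset.univ.filter
              (fun p : Fin m × Fin 3 => clauses p.1 p.2 = (v, !τ v))).image Sum.inl)).card := by
              rw [Finset.card_insert_of_notMem (by simp),
                Finset.card_image_of_injective _ Sum.inl_injective, hlit]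
          _ ≤ _ := Finset.card_le_card hTsub
    calc 2 * n + SatC.card = ∑ s ∈ S₁ ∪ S₂, dshop s := by
          rw [Finset.sum_union hdisj, hS1, hS2,
            Finset.sum_image (fun a _ b _ h => Sum.inl_injective h),
            Finset.sum_image (fun a _ b _ h => by
              exact (Prod.ext_iff.mp (Sum.inr_injective h)).1)]
          simp [dshop, mul_comm, add_comm]
      _ ≤ ∑ s ∈ F, dshop s := Finset.sum_le_sum_of_subset hsub
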